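/- Let n ≥ 1 and let S = {A_1, …, A_k} be a Sperner family on {1,…,n} with k ≥ 2, |A_j| ≥ 2 for every j = 1, …, k, and ⋂_{j=1}^k A_j = ∅. Then the module h_S has exactly one fixed point ω in the open interval (0,1) (i.e., exactly one ω ∈ (0,1) with h_S(ω) = ω), and this fixed point is repellent: h_S′(ω) > 1. -/

import Mathlib

/-! `h_S(t)` is the probability that a random set, containing each point independently with
probability `t`, meets every member of `S`: the reliability polynomial `h` of the monotone Boolean
function "meets every `A ∈ S`". Conditioning on the first coordinate, `h = (1 - t) h₀ + t h₁`,
gives by induction on `n` the Moore–Shannon inequality `t (1 - t) h' ≥ h (1 - h)`, with equality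
at some `t ∈ (0,1)` only for constant and dictator functions. The hypotheses exclude these, so
`logit h(t) - logit t` is strictly increasing on `(0,1)`: there is at most one fixed point `ω`,
and `h'(ω) > h(ω) (1 - h(ω)) / (ω (1 - ω)) = 1`. A fixed point exists by the intermediate value
theorem: a set meeting every member has at least two points (the intersection is empty) and a set
missing a member misses at least two (`|A| ≥ 2`), so `h(t) = O(t²)` at `0` and
`1 - h(t) = O((1 - t)²)` at `1`. -/

open MeasureTheory

/-- The Sperner statistic of a family `S` of subsets of `{1,…,n}`:
`H_S(x) = max_{A ∈ S} min_{i ∈ A} x_i`. -/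
noncomputable def spernerStat {n : ℕ} (S : Finset (Finset (Fin n))) (hS : S.Nonempty)
    (hne : ∀ A ∈ S, A.Nonempty) (x : Fin n → ℝ) : ℝ :=
  S.attach.sup' (Finset.attach_nonempty_iff.mpr hS)
    (fun A => A.1.inf' (hne A.1 A.2) x)

/- The module of a Sperner family:
`h_S(t) = Σ_{ε ∈ {0,1}^n, H_S(ε)=0} t^{z(ε)} (1−t)^{n−z(ε)}`, where `z(ε)` is the
number of zero coordinates of `ε`. -/
open scoped Classical in
noncomputable def spernerModule {n : ℕ} (S : Finset (Finset (Fin n))) (hS : S.Nonempty)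
    (hne : ∀ A ∈ S, A.Nonempty) (t : ℝ) : ℝ :=
  ∑ ε : Fin n → Bool,
    if spernerStat S hS hne (fun i => if ε i then 1 else 0) = 0 then
      t ^ (Finset.univ.filter fun i => ε i = false).card *
        (1 - t) ^ (n - (Finset.univ.filter fun i => ε i = false).card)
    else 0

open Finset

section Reliability

variable {n : ℕ}

noncomputable def coordWeight (t : ℝ) (x : Fin n → Bool) : ℝ :=
  ∏ i, if x i then t else 1 - t

/-- The Moore–Shannon reliability polynomial of `g`: the probability that `g` holds when the
coordinates are independently `true` with probability `t`. -/
noncomputable def reliability (g : (Fin n → Bool) → Bool) (t : ℝ) : ℝ :=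
  ∑ x, if g x then coordWeight t x else 0

lemma coordWeight_nonneg {t : ℝ} (h0 : 0 ≤ t) (h1 : t ≤ 1) (x : Fin n → Bool) :
    0 ≤ coordWeight t x :=
  prod_nonneg fun i _ => by split <;> linarith

lemma coordWeight_pos {t : ℝ} (h0 : 0 < t) (h1 : t < 1) (x : Fin n → Bool) :
    0 < coordWeight t x :=
  prod_pos fun i _ => by split <;> linarith

lemma card_filter_eq_false (x : Fin n → Bool) :
    #{i | x i = false} = n - #{i | x i = true} := by
  have := card_filter_add_card_filter_not (s := univ) (fun i => x i = true)
  simp only [Bool.not_eq_true, card_univ, Fintype.card_fin] at this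
  omega

lemma coordWeight_eq_pow (t : ℝ) (x : Fin n → Bool) :
    coordWeight t x = t ^ #{i | x i = true} * (1 - t) ^ #{i | x i = false} := by
  simp [coordWeight, prod_ite]

lemma sum_coordWeight (t : ℝ) : ∑ x : Fin n → Bool, coordWeight t x = 1 := by
  unfold coordWeight
  rw [← Fintype.prod_sum (fun (_ : Fin n) (b : Bool) => if b then t else 1 - t)]
  simp

lemma coordWeight_cons (t : ℝ) (b : Bool) (y : Fin n → Bool) :
    coordWeight t (Fin.cons b y : Fin (n + 1) → Bool) =
      (if b then t else 1 - t) * coordWeight t y := by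
  simp [coordWeight, Fin.prod_univ_succ]

lemma reliability_bot (t : ℝ) : reliability (⊥ : (Fin n → Bool) → Bool) t = 0 := by
  simp [reliability]

lemma reliability_top (t : ℝ) : reliability (⊤ : (Fin n → Bool) → Bool) t = 1 := by
  simp [reliability, sum_coordWeight]

lemma reliability_not (g : (Fin n → Bool) → Bool) (t : ℝ) :
    reliability (fun x => !g x) t = 1 - reliability g t := by
  rw [← sum_coordWeight t, reliability, reliability, ← sum_sub_distrib]
  refine sum_congr rfl fun x _ => ?_
  cases g x <;> simp

lemma monotone_ite_coordWeight {t : ℝ} (h0 : 0 ≤ t) (h1 : t ≤ 1) (x : Fin n → Bool) :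
    Monotone fun b : Bool => if b then coordWeight t x else 0 := by
  intro b b' h
  have := Bool.le_iff_imp.1 h
  cases b <;> cases b' <;> simp_all [coordWeight_nonneg h0 h1]

lemma reliability_mono {g g' : (Fin n → Bool) → Bool} (h : g ≤ g') {t : ℝ}
    (h0 : 0 ≤ t) (h1 : t ≤ 1) : reliability g t ≤ reliability g' t :=
  sum_le_sum fun x _ => monotone_ite_coordWeight h0 h1 x (h x)

lemma reliability_nonneg (g : (Fin n → Bool) → Bool) {t : ℝ} (h0 : 0 ≤ t) (h1 : t ≤ 1) :
    0 ≤ reliability g t :=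
  reliability_bot (n := n) t ▸ reliability_mono bot_le h0 h1

lemma reliability_le_one (g : (Fin n → Bool) → Bool) {t : ℝ} (h0 : 0 ≤ t) (h1 : t ≤ 1) :
    reliability g t ≤ 1 :=
  reliability_top (n := n) t ▸ reliability_mono le_top h0 h1

lemma eq_of_le_of_reliability_eq {g g' : (Fin n → Bool) → Bool} (h : g ≤ g') {t : ℝ}
    (h0 : 0 < t) (h1 : t < 1) (heq : reliability g t = reliability g' t) : g = g' := by
  funext x
  have hx := (sum_eq_sum_iff_of_le fun x _ => monotone_ite_coordWeight h0.le h1.le x (h x)).1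
    heq x (mem_univ x)
  cases hg : g x <;> cases hg' : g' x
  · rfl
  · simp [hg, hg', (coordWeight_pos h0 h1 x).ne] at hx
  · simpa [hg, hg'] using Bool.le_iff_imp.1 (h x)
  · rfl

lemma reliability_pos {g : (Fin n → Bool) → Bool} (hg : g ≠ ⊥) {t : ℝ} (h0 : 0 < t)
    (h1 : t < 1) : 0 < reliability g t :=
  (reliability_nonneg g h0.le h1.le).lt_of_ne fun h =>
    hg (eq_of_le_of_reliability_eq bot_le h0 h1 (by rw [reliability_bot, h])).symm

lemma reliability_lt_one {g : (Fin n → Bool) → Bool} (hg : g ≠ ⊤) {t : ℝ} (h0 : 0 < t)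
    (h1 : t < 1) : reliability g t < 1 :=
  (reliability_le_one g h0.le h1.le).lt_of_ne fun h =>
    hg (eq_of_le_of_reliability_eq le_top h0 h1 (by rw [reliability_top, h]))

end Reliability

section Restriction

variable {n : ℕ}

def restrictHead (g : (Fin (n + 1) → Bool) → Bool) (b : Bool) : (Fin n → Bool) → Bool :=
  fun y => g (Fin.cons b y)

lemma restrictHead_head_tail (g : (Fin (n + 1) → Bool) → Bool) (x : Fin (n + 1) → Bool) :
    restrictHead g (x 0) (Fin.tail x) = g x := by
  simp [restrictHead]

lemma Monotone.restrictHead {g : (Fin (n + 1) → Bool) → Bool} (hg : Monotone g) (b : Bool) :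
    Monotone (restrictHead g b) :=
  fun _ _ h => hg (Fin.cons_le_cons.2 ⟨le_rfl, h⟩)

lemma restrictHead_false_le {g : (Fin (n + 1) → Bool) → Bool} (hg : Monotone g) :
    restrictHead g false ≤ restrictHead g true :=
  fun _ => hg (Fin.cons_le_cons.2 ⟨Bool.false_le _, le_rfl⟩)

lemma reliability_succ (g : (Fin (n + 1) → Bool) → Bool) (t : ℝ) :
    reliability g t = (1 - t) * reliability (restrictHead g false) t +
      t * reliability (restrictHead g true) t := by
  rw [reliability, ← (Fin.consEquiv fun _ => Bool).sum_comp, Fintype.sum_prod_type,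
    Fintype.sum_bool, reliability, reliability, mul_sum, mul_sum, add_comm]
  congr 1 <;> refine sum_congr rfl fun y _ => ?_ <;>
    simp only [Fin.consEquiv, Equiv.coe_fn_mk, coordWeight_cons, restrictHead] <;>
    split_ifs <;> simp_all

end Restriction

lemma eq_bot_or_eq_top_of_fin_zero (g : (Fin 0 → Bool) → Bool) : g = ⊥ ∨ g = ⊤ := by
  have hg (x : Fin 0 → Bool) : g x = g default := congrArg g (Subsingleton.elim x default)
  cases h : g default
  · exact Or.inl (funext fun x => (hg x).trans h)
  · exact Or.inr (funext fun x => (hg x).trans h)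

lemma differentiable_reliability {n : ℕ} (g : (Fin n → Bool) → Bool) :
    Differentiable ℝ (reliability g) := by
  induction n with
  | zero =>
    rcases eq_bot_or_eq_top_of_fin_zero g with rfl | rfl
    · simp only [funext reliability_bot]; fun_prop
    · simp only [funext reliability_top]; fun_prop
  | succ n ih =>
    have h0 := ih (restrictHead g false)
    have h1 := ih (restrictHead g true)
    rw [funext (reliability_succ g)]
    fun_prop

lemma deriv_reliability_succ {n : ℕ} (g : (Fin (n + 1) → Bool) → Bool) (t : ℝ) :
    deriv (reliability g) t =
      reliability (restrictHead g true) t - reliability (restrictHead g false) t +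
        (1 - t) * deriv (reliability (restrictHead g false)) t +
        t * deriv (reliability (restrictHead g true)) t := by
  have h0 := (differentiable_reliability (restrictHead g false) t).hasDerivAt
  have h1 := (differentiable_reliability (restrictHead g true) t).hasDerivAt
  rw [funext (reliability_succ g)]
  refine ((((hasDerivAt_id t).const_sub 1).mul h0).add ((hasDerivAt_id t).mul h1)).deriv.trans ?_
  simp only [id]
  ring

section MooreShannon

variable {n : ℕ}

noncomputable def reliabilityDefect (g : (Fin n → Bool) → Bool) (t : ℝ) : ℝ :=
  t * (1 - t) * deriv (reliability g) t - reliability g t * (1 - reliability g t)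

lemma reliabilityDefect_bot (t : ℝ) : reliabilityDefect (⊥ : (Fin n → Bool) → Bool) t = 0 := by
  simp [reliabilityDefect, funext reliability_bot]

lemma reliabilityDefect_top (t : ℝ) : reliabilityDefect (⊤ : (Fin n → Bool) → Bool) t = 0 := by
  simp [reliabilityDefect, funext reliability_top]

lemma reliabilityDefect_succ (g : (Fin (n + 1) → Bool) → Bool) (t : ℝ) :
    reliabilityDefect g t =
      (1 - t) * reliabilityDefect (restrictHead g false) t +
        t * reliabilityDefect (restrictHead g true) t +
        t * (1 - t) *
          ((reliability (restrictHead g true) t - reliability (restrictHead g false) t) *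
            (1 - (reliability (restrictHead g true) t - reliability (restrictHead g false) t))) := by
  rw [reliabilityDefect, reliabilityDefect, reliabilityDefect, deriv_reliability_succ,
    reliability_succ]
  ring

theorem reliabilityDefect_nonneg {g : (Fin n → Bool) → Bool} (hg : Monotone g) {t : ℝ}
    (h0 : 0 ≤ t) (h1 : t ≤ 1) : 0 ≤ reliabilityDefect g t := by
  induction n with
  | zero =>
    rcases eq_bot_or_eq_top_of_fin_zero g with rfl | rfl
    · exact (reliabilityDefect_bot t).ge
    · exact (reliabilityDefect_top t).ge
  | succ n ih =>
    have hle := reliability_mono (restrictHead_false_le hg) h0 h1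
    have hf := reliability_nonneg (restrictHead g false) h0 h1
    have ht := reliability_le_one (restrictHead g true) h0 h1
    have h1t : 0 ≤ 1 - t := sub_nonneg.2 h1
    rw [reliabilityDefect_succ]
    exact add_nonneg
      (add_nonneg (mul_nonneg h1t (ih (hg.restrictHead false)))
        (mul_nonneg h0 (ih (hg.restrictHead true))))
      (mul_nonneg (mul_nonneg h0 h1t) (mul_nonneg (sub_nonneg.2 hle) (by linarith)))

lemma eq_of_restrictHead_eq {g : (Fin (n + 1) → Bool) → Bool}
    {f : Bool → (Fin n → Bool) → Bool} (h : ∀ b, restrictHead g b = f b) :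
    g = fun x => f (x 0) (Fin.tail x) :=
  funext fun x => by rw [← h, restrictHead_head_tail]

lemma restrictHead_of_reliabilityDefect_eq_zero {g : (Fin (n + 1) → Bool) → Bool}
    (hg : Monotone g) {t : ℝ} (h0 : 0 < t) (h1 : t < 1) (hD : reliabilityDefect g t = 0) :
    reliabilityDefect (restrictHead g false) t = 0 ∧
      (restrictHead g false = restrictHead g true ∨
        restrictHead g false = ⊥ ∧ restrictHead g true = ⊤) := by
  rw [reliabilityDefect_succ] at hD
  set g₀ := restrictHead g false
  set g₁ := restrictHead g true
  have hle : g₀ ≤ g₁ := restrictHead_false_le hg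
  have hr := reliability_mono hle h0.le h1.le
  have hf := reliability_nonneg g₀ h0.le h1.le
  have ht := reliability_le_one g₁ h0.le h1.le
  have h1t : 0 < 1 - t := sub_pos.2 h1
  have hD₀ := reliabilityDefect_nonneg (hg.restrictHead false) h0.le h1.le
  have hD₁ := reliabilityDefect_nonneg (hg.restrictHead true) h0.le h1.le
  set X := (reliability g₁ t - reliability g₀ t) * (1 - (reliability g₁ t - reliability g₀ t))
  have hX : 0 ≤ X := mul_nonneg (sub_nonneg.2 hr) (by linarith)
  have hA := mul_nonneg h1t.le hD₀
  have hB := mul_nonneg h0.le hD₁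
  have hC := mul_nonneg (mul_pos h0 h1t).le hX
  have hA0 : (1 - t) * reliabilityDefect g₀ t = 0 := by linarith
  have hC0 : t * (1 - t) * X = 0 := by linarith
  refine ⟨(mul_eq_zero.1 hA0).resolve_left h1t.ne', ?_⟩
  rcases mul_eq_zero.1 ((mul_eq_zero.1 hC0).resolve_left (mul_pos h0 h1t).ne') with h | h
  · exact Or.inl (eq_of_le_of_reliability_eq hle h0 h1 (by linarith))
  · refine Or.inr ⟨(eq_of_le_of_reliability_eq bot_le h0 h1 ?_).symm,
      eq_of_le_of_reliability_eq le_top h0 h1 ?_⟩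
    · rw [reliability_bot]; linarith
    · rw [reliability_top]; linarith

theorem eq_bot_or_eq_top_or_dictator_of_reliabilityDefect_eq_zero {g : (Fin n → Bool) → Bool}
    (hg : Monotone g) {t : ℝ} (h0 : 0 < t) (h1 : t < 1) (hD : reliabilityDefect g t = 0) :
    g = ⊥ ∨ g = ⊤ ∨ ∃ i, g = fun x => x i := by
  induction n with
  | zero => exact (eq_bot_or_eq_top_of_fin_zero g).imp_right Or.inl
  | succ n ih =>
    obtain ⟨hD₀, heq | ⟨hbot, htop⟩⟩ :=
      restrictHead_of_reliabilityDefect_eq_zero hg h0 h1 hD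
    · have hg₀ : g = fun x => restrictHead g false (Fin.tail x) :=
        eq_of_restrictHead_eq (f := fun _ => restrictHead g false) fun b => by
          cases b
          exacts [rfl, heq.symm]
      rcases ih (hg.restrictHead false) hD₀ with h | h | ⟨i, h⟩
      · exact Or.inl (hg₀.trans (by rw [h]; rfl))
      · exact Or.inr (Or.inl (hg₀.trans (by rw [h]; rfl)))
      · exact Or.inr (Or.inr ⟨i.succ, hg₀.trans (by rw [h]; rfl)⟩)
    · refine Or.inr (Or.inr ⟨0, eq_of_restrictHead_eq (f := fun b _ => b) fun b => ?_⟩)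
      cases b
      exacts [hbot, htop]

theorem reliabilityDefect_pos {g : (Fin n → Bool) → Bool} (hg : Monotone g) (hbot : g ≠ ⊥)
    (htop : g ≠ ⊤) (hdict : ∀ i, g ≠ fun x => x i) {t : ℝ} (h0 : 0 < t) (h1 : t < 1) :
    0 < reliabilityDefect g t := by
  refine (reliabilityDefect_nonneg hg h0.le h1.le).lt_of_ne' fun hD => ?_
  rcases eq_bot_or_eq_top_or_dictator_of_reliabilityDefect_eq_zero hg h0 h1 hD with h | h | ⟨i, h⟩
  exacts [hbot h, htop h, hdict i h]

end MooreShannon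

noncomputable def logit (p : ℝ) : ℝ := Real.log p - Real.log (1 - p)

lemma hasDerivAt_logit {p : ℝ} (h0 : 0 < p) (h1 : p < 1) :
    HasDerivAt logit (1 / (p * (1 - p))) p := by
  have h1p : 1 - p ≠ 0 := (sub_pos.2 h1).ne'
  refine ((Real.hasDerivAt_log h0.ne').sub (((hasDerivAt_id p).const_sub 1).log h1p)).congr_deriv ?_
  simp only [id]
  field_simp
  ring

section FixedPoint

variable {n : ℕ} {g : (Fin n → Bool) → Bool}

theorem strictMonoOn_logit_reliability_sub_logit (hg : Monotone g) (hbot : g ≠ ⊥)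
    (htop : g ≠ ⊤) (hdict : ∀ i, g ≠ fun x => x i) :
    StrictMonoOn (fun s => logit (reliability g s) - logit s) (Set.Ioo 0 1) := by
  have hderiv : ∀ s ∈ Set.Ioo (0 : ℝ) 1, HasDerivAt (fun s => logit (reliability g s) - logit s)
      (deriv (reliability g) s / (reliability g s * (1 - reliability g s)) -
        1 / (s * (1 - s))) s := by
    rintro s ⟨h0, h1⟩
    have hh := (hasDerivAt_logit (reliability_pos hbot h0 h1) (reliability_lt_one htop h0 h1)).comp
      s (differentiable_reliability g s).hasDerivAt
    exact (hh.sub (hasDerivAt_logit h0 h1)).congr_deriv (by ring)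
  refine strictMonoOn_of_deriv_pos (convex_Ioo 0 1)
    (fun s hs => (hderiv s hs).continuousAt.continuousWithinAt) fun s hs => ?_
  rw [interior_Ioo] at hs
  obtain ⟨h0, h1⟩ := hs
  have hp := reliability_pos hbot h0 h1
  have hq := sub_pos.2 (reliability_lt_one htop h0 h1)
  have hD := reliabilityDefect_pos hg hbot htop hdict h0 h1
  rw [(hderiv s ⟨h0, h1⟩).deriv, div_sub_div _ _ (mul_pos hp hq).ne'
    (mul_pos h0 (sub_pos.2 h1)).ne']
  refine div_pos ?_ (by positivity)
  rw [reliabilityDefect] at hD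
  linarith

lemma coordWeight_le_sq_of_two_le_card_true {t : ℝ} (h0 : 0 ≤ t) (h1 : t ≤ 1)
    {x : Fin n → Bool} (hx : 2 ≤ #{i | x i = true}) : coordWeight t x ≤ t ^ 2 := by
  rw [coordWeight_eq_pow, ← mul_one (t ^ 2)]
  exact mul_le_mul (pow_le_pow_of_le_one h0 h1 hx) (pow_le_one₀ (sub_nonneg.2 h1) (by linarith))
    (pow_nonneg (sub_nonneg.2 h1) _) (by positivity)

lemma coordWeight_le_sq_of_two_le_card_false {t : ℝ} (h0 : 0 ≤ t) (h1 : t ≤ 1)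
    {x : Fin n → Bool} (hx : 2 ≤ #{i | x i = false}) : coordWeight t x ≤ (1 - t) ^ 2 := by
  rw [coordWeight_eq_pow, ← one_mul ((1 - t) ^ 2)]
  exact mul_le_mul (pow_le_one₀ h0 h1) (pow_le_pow_of_le_one (sub_nonneg.2 h1) (by linarith) hx)
    (by positivity) zero_le_one

lemma reliability_le_two_pow_mul {t c : ℝ} (hc : 0 ≤ c)
    (hg : ∀ x, g x = true → coordWeight t x ≤ c) : reliability g t ≤ 2 ^ n * c := by
  calc reliability g t ≤ ∑ _x : Fin n → Bool, c :=
        sum_le_sum fun x _ => by split_ifs with h; exacts [hg x h, hc]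
    _ = 2 ^ n * c := by simp

lemma exists_two_pow_mul_sq_lt (n : ℕ) : ∃ δ ∈ Set.Ioo (0 : ℝ) 1, 2 ^ n * δ ^ 2 < δ := by
  have hδ : (2 : ℝ) ^ n * (2 ^ (n + 1))⁻¹ = 1 / 2 := by rw [pow_succ]; field_simp
  have hδ0 : (0 : ℝ) < (2 ^ (n + 1))⁻¹ := by positivity
  refine ⟨(2 ^ (n + 1))⁻¹, ⟨hδ0, ?_⟩, ?_⟩
  · exact inv_lt_one_of_one_lt₀ (one_lt_pow₀ one_lt_two n.succ_ne_zero)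
  · rw [sq, ← mul_assoc, hδ]
    linarith

lemma exists_reliability_lt_self (htrue : ∀ x, g x = true → 2 ≤ #{i | x i = true}) :
    ∃ t ∈ Set.Ioo (0 : ℝ) 1, reliability g t < t := by
  obtain ⟨δ, ⟨h0, h1⟩, hδ⟩ := exists_two_pow_mul_sq_lt n
  refine ⟨δ, ⟨h0, h1⟩, lt_of_le_of_lt ?_ hδ⟩
  exact reliability_le_two_pow_mul (sq_nonneg δ) fun x hx =>
    coordWeight_le_sq_of_two_le_card_true h0.le h1.le (htrue x hx)

lemma exists_lt_reliability_self (hfalse : ∀ x, g x = false → 2 ≤ #{i | x i = false}) :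
    ∃ t ∈ Set.Ioo (0 : ℝ) 1, t < reliability g t := by
  obtain ⟨δ, ⟨h0, h1⟩, hδ⟩ := exists_two_pow_mul_sq_lt n
  refine ⟨1 - δ, ⟨by linarith, by linarith⟩, ?_⟩
  have hnot : reliability (fun x => !g x) (1 - δ) ≤ 2 ^ n * δ ^ 2 := by
    refine reliability_le_two_pow_mul (sq_nonneg δ) fun x hx => ?_
    have := coordWeight_le_sq_of_two_le_card_false (t := 1 - δ) (by linarith) (by linarith)
      (hfalse x (by simpa using hx))
    rwa [sub_sub_cancel] at this
  rw [reliability_not] at hnot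
  linarith

lemma exists_reliability_eq_self (htrue : ∀ x, g x = true → 2 ≤ #{i | x i = true})
    (hfalse : ∀ x, g x = false → 2 ≤ #{i | x i = false}) :
    ∃ ω ∈ Set.Ioo (0 : ℝ) 1, reliability g ω = ω := by
  obtain ⟨a, ha, hga⟩ := exists_reliability_lt_self htrue
  obtain ⟨b, hb, hgb⟩ := exists_lt_reliability_self hfalse
  have hcont : ContinuousOn (fun s => reliability g s - s) (Set.uIcc a b) :=
    ((differentiable_reliability g).continuous.sub continuous_id).continuousOn
  obtain ⟨ω, hω, hfix⟩ := intermediate_value_uIcc hcont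
    (Set.mem_uIcc.2 (Or.inl ⟨by linarith, by linarith⟩) : (0 : ℝ) ∈ _)
  exact ⟨ω, Set.ordConnected_Ioo.uIcc_subset ha hb hω, sub_eq_zero.1 hfix⟩

theorem reliability_unique_repellent_fixed_point (hg : Monotone g)
    (htrue : ∀ x, g x = true → 2 ≤ #{i | x i = true})
    (hfalse : ∀ x, g x = false → 2 ≤ #{i | x i = false}) :
    ∃ ω ∈ Set.Ioo (0 : ℝ) 1, reliability g ω = ω ∧ 1 < deriv (reliability g) ω ∧
      ∀ ω' ∈ Set.Ioo (0 : ℝ) 1, reliability g ω' = ω' → ω' = ω := by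
  have hbot : g ≠ ⊥ := fun h => by simpa using hfalse ⊤ (by rw [h]; rfl)
  have htop : g ≠ ⊤ := fun h => by simpa using htrue ⊥ (by rw [h]; rfl)
  have hdict (i : Fin n) : g ≠ fun x => x i := fun h => by
    simpa [Pi.single_apply, filter_eq'] using htrue (Pi.single i true) (by rw [h]; simp)
  obtain ⟨ω, hω, hfix⟩ := exists_reliability_eq_self htrue hfalse
  refine ⟨ω, hω, hfix, ?_, fun ω' hω' hfix' => ?_⟩
  · have hD := reliabilityDefect_pos hg hbot htop hdict hω.1 hω.2
    rw [reliabilityDefect, hfix] at hD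
    exact lt_of_mul_lt_mul_left (by linarith) (mul_pos hω.1 (sub_pos.2 hω.2)).le
  · refine (strictMonoOn_logit_reliability_sub_logit hg hbot htop hdict).injOn hω' hω ?_
    simp only [hfix, hfix', sub_self]

end FixedPoint

section Sperner

variable {n : ℕ}

def hitsAll (S : Finset (Finset (Fin n))) (x : Fin n → Bool) : Bool :=
  decide (∀ A ∈ S, ∃ i ∈ A, x i = true)

lemma monotone_hitsAll (S : Finset (Finset (Fin n))) : Monotone (hitsAll S) := by
  refine fun x y hxy => Bool.le_iff_imp.2 fun hx => ?_
  simp only [hitsAll, decide_eq_true_eq] at hx ⊢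
  intro A hA
  obtain ⟨i, hi, hxi⟩ := hx A hA
  exact ⟨i, hi, Bool.le_iff_imp.1 (hxy i) hxi⟩

lemma two_le_card_true_of_hitsAll {S : Finset (Finset (Fin n))} (hS : S.Nonempty)
    (hint : S.inf' hS id = ∅) {x : Fin n → Bool} (hx : hitsAll S x = true) :
    2 ≤ #{i | x i = true} := by
  simp only [hitsAll, decide_eq_true_eq] at hx
  by_contra! hlt
  have hone := card_le_one.1 (Nat.le_of_lt_succ hlt)
  obtain ⟨A₀, hA₀⟩ := hS
  obtain ⟨i, -, hxi⟩ := hx A₀ hA₀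
  have hi : i ∈ S.inf' ⟨A₀, hA₀⟩ id := by
    refine (mem_inf' _).2 fun A hA => ?_
    obtain ⟨j, hj, hxj⟩ := hx A hA
    rwa [hone i (by simpa using hxi) j (by simpa using hxj)]
  simp [hint] at hi

lemma two_le_card_false_of_hitsAll_eq_false {S : Finset (Finset (Fin n))}
    (hcard : ∀ A ∈ S, 2 ≤ A.card) {x : Fin n → Bool} (hx : hitsAll S x = false) :
    2 ≤ #{i | x i = false} := by
  simp only [hitsAll, decide_eq_false_iff_not, not_forall, not_exists, not_and,
    Bool.not_eq_true] at hx
  obtain ⟨A, hA, hxA⟩ := hx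
  exact (hcard A hA).trans (card_le_card fun i hi => by simpa using hxA i hi)

lemma spernerStat_indicator_eq_zero_iff (S : Finset (Finset (Fin n))) (hS : S.Nonempty)
    (hne : ∀ A ∈ S, A.Nonempty) (ε : Fin n → Bool) :
    spernerStat S hS hne (fun i => if ε i then 1 else 0) = 0 ↔ ∀ A ∈ S, ∃ i ∈ A, ε i = false := by
  have hle (b : Bool) : (if b then (1 : ℝ) else 0) ≤ 0 ↔ b = false := by cases b <;> simp
  have hge (b : Bool) : (0 : ℝ) ≤ if b then 1 else 0 := by cases b <;> simp
  rw [le_antisymm_iff]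
  simp [spernerStat, sup'_le_iff, inf'_le_iff, le_sup'_iff, le_inf'_iff, hle, hge,
    show ∃ A, A ∈ S from hS]

lemma spernerModule_eq_reliability (S : Finset (Finset (Fin n))) (hS : S.Nonempty)
    (hne : ∀ A ∈ S, A.Nonempty) : spernerModule S hS hne = reliability (hitsAll S) := by
  funext t
  refine Fintype.sum_equiv (Equiv.piCongrRight fun _ => Equiv.boolNot) _ _ fun ε => ?_
  have hcond : spernerStat S hS hne (fun i => if ε i then 1 else 0) = 0 ↔
      hitsAll S (fun i => !ε i) = true := by
    simp [spernerStat_indicator_eq_zero_iff, hitsAll]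
  have hw : coordWeight t (fun i => !ε i) =
      t ^ #{i | ε i = false} * (1 - t) ^ (n - #{i | ε i = false}) := by
    rw [coordWeight_eq_pow, card_filter_eq_false]
    simp
  exact if_congr hcond hw.symm rfl

end Sperner

theorem sperner_module_unique_repellent_fixed_point_general
    (n : ℕ) (S : Finset (Finset (Fin n))) (hS : S.Nonempty)
    (hne : ∀ A ∈ S, A.Nonempty) (hcard : ∀ A ∈ S, 2 ≤ A.card)
    (hint : S.inf' hS id = ∅) :
    ∃ ω ∈ Set.Ioo (0 : ℝ) 1, spernerModule S hS hne ω = ω ∧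
      1 < deriv (spernerModule S hS hne) ω ∧
      ∀ ω' ∈ Set.Ioo (0 : ℝ) 1, spernerModule S hS hne ω' = ω' → ω' = ω := by
  rw [spernerModule_eq_reliability]
  exact reliability_unique_repellent_fixed_point (monotone_hitsAll S)
    (fun _ => two_le_card_true_of_hitsAll hS hint)
    (fun _ => two_le_card_false_of_hitsAll_eq_false hcard)

/-- If a Sperner family has at least two members, every member has at least two elements,
and the members have empty common intersection, then its module has exactly one fixed
point `ω ∈ (0,1)`, which is repellent: `h_S′(ω) > 1`. -/
theorem sperner_module_unique_repellent_fixed_point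
    (n : ℕ) (hn : 1 ≤ n) (S : Finset (Finset (Fin n))) (hS : S.Nonempty)
    (hne : ∀ A ∈ S, A.Nonempty) (hsp : ∀ A ∈ S, ∀ B ∈ S, A ⊆ B → A = B)
    (hk : 2 ≤ S.card) (hcard : ∀ A ∈ S, 2 ≤ A.card) (hint : S.inf' hS id = ∅) :
    ∃ ω ∈ Set.Ioo (0 : ℝ) 1, spernerModule S hS hne ω = ω ∧
      1 < deriv (spernerModule S hS hne) ω ∧
      ∀ ω' ∈ Set.Ioo (0 : ℝ) 1, spernerModule S hS hne ω' = ω' → ω' = ω :=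
  sperner_module_unique_repellent_fixed_point_general n S hS hne hcard hint
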